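/- Under the same assumptions (A1)–(A3), there exists C < ∞ such that for every l ≥ 1, N ≥ 1, and bounded Lipschitz φ, the bias satisfies | E[ (1/N) Σ_{n=1}^N { φ(X̄ₙ(l)) − φ(X̲ₙ(l)) } ] − [π_l − π_{l−1}](φ) | ≤ C (‖φ‖_∞ ∨ ‖φ‖_Lip) h_l^β / N. -/

import Mathlib

/-
By the law of the chain, the expectation equals `(1/N) ∑ₙ (K_l^n φ - K_{l-1}^n φ)(x₀)`.
Telescoping, `K_l^n - K_{l-1}^n = ∑_{k+m=n-1} K_{l-1}^k (K_l - K_{l-1}) K_l^m`. Since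
`K_l - K_{l-1}` kills constants, the perturbation bound (A3) applies to `K_l^m φ - π_l(φ)`, which
is `O(ρ^m)` on `X` by (A1); the outer `K_{l-1}^k` is within `O(ρ^k)` of its `π_{l-1}`-mean, again
by (A1). Hence the `n`-th term is `∑_{m<n} π_{l-1}((K_l - K_{l-1}) K_l^m φ)` up to
`O(n ρ^n h_l^β)`, the full series sums to `[π_l - π_{l-1}](φ)` (both chains converge), and
the errors, including the tails `O(ρ^n h_l^β)`, add up to `O(h_l^β)` uniformly in `N`.
-/
open MeasureTheory ProbabilityTheory

/-- The chain generated by iterating the random map `ξ` with driving noise `V`,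
started at `x`. -/
noncomputable def mapChain {E U Ω : Type*} (ξ : E → U → E) (V : ℕ → Ω → U) (x : E) :
    ℕ → Ω → E
  | 0 => fun _ => x
  | n + 1 => fun ω => ξ (mapChain ξ V x n ω) (V (n + 1) ω)

/-- The `n`-step marginal law `K^n(x, ·)` of the Markov kernel induced by the
random map `ξ` with noise law `μ`. -/
noncomputable def kIterM {E U : Type*} [MeasurableSpace E] [MeasurableSpace U]
    (ξ : E → U → E) (μ : MeasureTheory.Measure U) : ℕ → E → MeasureTheory.Measure E
  | 0, x => MeasureTheory.Measure.dirac x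
  | n + 1, x => (kIterM ξ μ n x).bind fun y => μ.map fun u => ξ y u

open Filter Topology Set

lemma Finset.sum_Icc_one_eq_sum_range {M : Type*} [AddCommMonoid M] (F : ℕ → M) (N : ℕ) :
    ∑ n ∈ Finset.Icc 1 N, F n = ∑ n ∈ Finset.range N, F (n + 1) := by
  rw [Finset.range_eq_Ico, Finset.sum_Ico_add', ← Finset.Ico_succ_right_eq_Icc]
  rfl

lemma Measurable.integrable_of_abs_le {α : Type*} [MeasurableSpace α] {μ : Measure α}
    [IsFiniteMeasure μ] {f : α → ℝ} {B : ℝ} (hf : Measurable f) (hB : ∀ x, |f x| ≤ B) :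
    Integrable f μ :=
  .of_bound hf.aestronglyMeasurable B (ae_of_all _ hB)

lemma abs_integral_le_of_ae_abs_le {α : Type*} [MeasurableSpace α] {μ : Measure α}
    [IsProbabilityMeasure μ] {f : α → ℝ} {G : ℝ} (hG : ∀ᵐ x ∂μ, |f x| ≤ G) :
    |∫ x, f x ∂μ| ≤ G := by
  simpa using norm_integral_le_of_norm_le_const (μ := μ) (f := f) hG

lemma abs_integral_sub_integral_le_of_abs_measureReal_sub_le {α : Type*} [MeasurableSpace α]
    {μ ν : Measure α} [IsProbabilityMeasure μ] [IsProbabilityMeasure ν] {ε G : ℝ}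
    (hμν : ∀ s, MeasurableSet s → |μ.real s - ν.real s| ≤ ε) {f : α → ℝ} (hf : Measurable f)
    (hfG : ∀ x, |f x| ≤ G) :
    |∫ x, f x ∂μ - ∫ x, f x ∂ν| ≤ 2 * G * ε := by
  have ⟨x⟩ := nonempty_of_isProbabilityMeasure μ
  have hG : 0 ≤ G := (abs_nonneg _).trans (hfG x)
  -- layer cake for the shifted function `f + G`, which takes values in `[0, 2G]`
  set g : α → ℝ := fun x => f x + G
  have hg : Measurable g := hf.add_const G
  have hg0 : ∀ x, 0 ≤ g x := fun x => by linarith [(abs_le.1 (hfG x)).1]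
  have hg2G : ∀ x, g x ≤ 2 * G := fun x => by linarith [(abs_le.1 (hfG x)).2]
  have layer (κ : Measure α) [IsProbabilityMeasure κ] :
      ∫ x, f x ∂κ = (∫ t in Ioc 0 (2 * G), κ.real {a | t ≤ g a}) - G := by
    rw [← (hg.integrable_of_abs_le fun x => (abs_of_nonneg (hg0 x)).trans_le (hg2G x)
      ).integral_eq_integral_Ioc_meas_le (ae_of_all _ hg0) (ae_of_all _ hg2G)]
    rw [integral_add (hf.integrable_of_abs_le hfG) (integrable_const G)]
    simp
  have hint (κ : Measure α) [IsProbabilityMeasure κ] :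
      IntegrableOn (fun t => κ.real {a | t ≤ g a}) (Ioc 0 (2 * G)) := by
    have hanti : Antitone fun t => κ.real {a | t ≤ g a} := fun s t hst =>
      measureReal_mono fun a (ha : t ≤ g a) => hst.trans ha
    exact (hanti.antitoneOn _).integrableOn_isCompact isCompact_Icc |>.mono_set Ioc_subset_Icc_self
  rw [layer μ, layer ν, sub_sub_sub_cancel_right, ← integral_sub (hint μ) (hint ν),
    ← Real.norm_eq_abs]
  calc _ ≤ ε * volume.real (Ioc (0 : ℝ) (2 * G)) :=
        norm_setIntegral_le_of_norm_le_const measure_Ioc_lt_top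
          fun t _ => hμν _ (measurableSet_le measurable_const hg)
    _ = 2 * G * ε := by simp [Real.volume_real_Ioc, hG, mul_comm]

lemma MeasureTheory.Measure.integral_bind {α β : Type*} [MeasurableSpace α] [MeasurableSpace β]
    {m : Measure α} {κ : α → Measure β} (hκ : Measurable κ) {f : β → ℝ}
    (hf : Integrable f (m.bind κ)) :
    ∫ y, f y ∂(m.bind κ) = ∫ x, ∫ y, f y ∂(κ x) ∂m :=
  Kernel.integral_comp (η := ⟨κ, hκ⟩) (κ := Kernel.const Unit m) (a := ()) hf

section KernelOperator

variable {E U : Type*} [MeasurableSpace U] {ξ : E → U → E} {μ : Measure U}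

noncomputable def kernelOp (ξ : E → U → E) (μ : Measure U) (f : E → ℝ) (x : E) : ℝ :=
  ∫ u, f (ξ x u) ∂μ

lemma kernelOp_indicator_of_mapsTo {X : Set E} (hξX : ∀ x ∈ X, ∀ u, ξ x u ∈ X) {x : E}
    (hx : x ∈ X) (f : E → ℝ) : kernelOp ξ μ (X.indicator f) x = kernelOp ξ μ f x := by
  simp only [kernelOp, Set.indicator_of_mem (hξX x hx _)]

lemma abs_kernelOp_le [IsProbabilityMeasure μ] {f : E → ℝ} {B : ℝ} (hfB : ∀ x, |f x| ≤ B)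
    (x : E) : |kernelOp ξ μ f x| ≤ B :=
  abs_integral_le_of_ae_abs_le (ae_of_all _ fun _ => hfB _)

lemma abs_kernelOp_iterate_le [IsProbabilityMeasure μ] {f : E → ℝ} {B : ℝ}
    (hfB : ∀ x, |f x| ≤ B) (n : ℕ) (x : E) : |(kernelOp ξ μ)^[n] f x| ≤ B := by
  induction n generalizing f with
  | zero => exact hfB x
  | succ n ih => exact ih (abs_kernelOp_le hfB)

variable [MeasurableSpace E]

lemma measurable_map_of_uncurry [SFinite μ] (hξ : Measurable (Function.uncurry ξ)) :
    Measurable fun x => μ.map (ξ x) := by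
  have h : (fun x => μ.map (ξ x)) = fun x => (μ.map (Prod.mk x)).map (Function.uncurry ξ) :=
    funext fun x => (Measure.map_map hξ measurable_prodMk_left).symm
  rw [h]
  exact (Measure.measurable_map _ hξ).comp Measurable.map_prodMk_left

lemma measurable_kernelOp [SFinite μ] (hξ : Measurable (Function.uncurry ξ)) {f : E → ℝ}
    (hf : Measurable f) : Measurable (kernelOp ξ μ f) :=
  (hf.comp hξ).stronglyMeasurable.integral_prod_right'.measurable

lemma measurable_kernelOp_iterate [SFinite μ] (hξ : Measurable (Function.uncurry ξ)) {f : E → ℝ}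
    (hf : Measurable f) (n : ℕ) : Measurable ((kernelOp ξ μ)^[n] f) := by
  induction n generalizing f with
  | zero => exact hf
  | succ n ih => exact ih (measurable_kernelOp hξ hf)

lemma ae_mem_kIterM [SFinite μ] (hξ : Measurable (Function.uncurry ξ)) {X : Set E}
    (hX : MeasurableSet X) (hξX : ∀ x ∈ X, ∀ u, ξ x u ∈ X) {x : E} (hx : x ∈ X) (n : ℕ) :
    ∀ᵐ y ∂(kIterM ξ μ n x), y ∈ X := by
  induction n with
  | zero => exact (ae_dirac_iff hX).2 hx
  | succ n ih =>
    refine Measure.ae_comp_of_ae_ae (κ := ⟨_, measurable_map_of_uncurry hξ⟩) hX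
      (ih.mono fun y hy => ?_)
    exact (ae_map_iff (hξ.comp measurable_prodMk_left).aemeasurable hX).2
      (ae_of_all _ (hξX y hy))

variable [IsProbabilityMeasure μ]

lemma isProbabilityMeasure_kIterM (hξ : Measurable (Function.uncurry ξ)) (n : ℕ) (x : E) :
    IsProbabilityMeasure (kIterM ξ μ n x) := by
  induction n with
  | zero => exact Measure.dirac.isProbabilityMeasure
  | succ n ih =>
    exact isProbabilityMeasure_bind (measurable_map_of_uncurry hξ).aemeasurable
      (ae_of_all _ fun y =>
        Measure.isProbabilityMeasure_map (hξ.comp measurable_prodMk_left).aemeasurable)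

lemma kernelOp_sub_const (hξ : Measurable (Function.uncurry ξ)) {f : E → ℝ} {B : ℝ}
    (hf : Measurable f) (hfB : ∀ x, |f x| ≤ B) (c : ℝ) (x : E) :
    kernelOp ξ μ (fun y => f y - c) x = kernelOp ξ μ f x - c := by
  have hfξ : Measurable fun u => f (ξ x u) := hf.comp (hξ.comp measurable_prodMk_left)
  simp only [kernelOp]
  rw [integral_sub (hfξ.integrable_of_abs_le fun _ => hfB _) (integrable_const c)]
  simp

lemma integral_kIterM_succ (hξ : Measurable (Function.uncurry ξ)) {f : E → ℝ} {B : ℝ}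
    (hf : Measurable f) (hfB : ∀ x, |f x| ≤ B) (n : ℕ) (x : E) :
    ∫ y, f y ∂(kIterM ξ μ (n + 1) x) = ∫ y, kernelOp ξ μ f y ∂(kIterM ξ μ n x) := by
  have := isProbabilityMeasure_kIterM (μ := μ) hξ (n + 1) x
  refine (Measure.integral_bind (measurable_map_of_uncurry hξ)
    (hf.integrable_of_abs_le hfB (μ := kIterM ξ μ (n + 1) x))).trans
    (integral_congr_ae (ae_of_all _ fun y => ?_))
  exact integral_map (hξ.comp measurable_prodMk_left).aemeasurable hf.aestronglyMeasurable

lemma integral_kIterM (hξ : Measurable (Function.uncurry ξ)) {f : E → ℝ} {B : ℝ}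
    (hf : Measurable f) (hfB : ∀ x, |f x| ≤ B) (n : ℕ) (x : E) :
    ∫ y, f y ∂(kIterM ξ μ n x) = (kernelOp ξ μ)^[n] f x := by
  induction n generalizing f with
  | zero => exact integral_dirac' f x hf.stronglyMeasurable
  | succ n ih =>
    rw [integral_kIterM_succ hξ hf hfB, ih (measurable_kernelOp hξ hf) (abs_kernelOp_le hfB),
      Function.iterate_succ_apply]

end KernelOperator

section ChainLaw

variable {E U Ω : Type*} [MeasurableSpace E] [mU : MeasurableSpace U]
  {ξ : E → U → E} {μ : Measure U} {V : ℕ → Ω → U}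

lemma measurable_mapChain_iSup_comap (hξ : Measurable (Function.uncurry ξ)) (x : E) (n : ℕ) :
    Measurable[⨆ i ∈ Set.Iic n, mU.comap (V i)] (mapChain ξ V x n) := by
  induction n with
  | zero => exact measurable_const
  | succ n ih =>
    have hle : ⨆ i ∈ Set.Iic n, mU.comap (V i) ≤ ⨆ i ∈ Set.Iic (n + 1), mU.comap (V i) :=
      biSup_mono fun i hi => Set.Iic_subset_Iic.2 n.le_succ hi
    have hV : Measurable[⨆ i ∈ Set.Iic (n + 1), mU.comap (V i)] (V (n + 1)) :=
      Measurable.of_comap_le (le_iSup₂ (f := fun i (_ : i ∈ Set.Iic (n + 1)) => mU.comap (V i))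
        (n + 1) Set.self_mem_Iic)
    exact hξ.comp ((ih.mono hle le_rfl).prodMk hV)

variable [MeasurableSpace Ω]

lemma measurable_mapChain (hξ : Measurable (Function.uncurry ξ)) (hV : ∀ n, Measurable (V n))
    (x : E) (n : ℕ) : Measurable (mapChain ξ V x n) :=
  (measurable_mapChain_iSup_comap hξ x n).mono (iSup₂_le fun i _ => (hV i).comap_le) le_rfl

lemma indepFun_mapChain {P : Measure Ω} (hξ : Measurable (Function.uncurry ξ))
    (hV : ∀ n, Measurable (V n)) (hVind : iIndepFun V P) (x : E) (n : ℕ) :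
    IndepFun (mapChain ξ V x n) (V (n + 1)) P := by
  rw [IndepFun_iff_Indep]
  have hindep := indep_iSup_of_disjoint (fun i => (hV i).comap_le)
    ((iIndepFun_iff_iIndep _ V P).1 hVind) (S := Set.Iic n) (T := {n + 1}) (by simp)
  refine indep_of_indep_of_le_right
    (indep_of_indep_of_le_left hindep (measurable_mapChain_iSup_comap hξ x n).comap_le) ?_
  exact le_iSup₂ (f := fun i (_ : i ∈ ({n + 1} : Set ℕ)) => mU.comap (V i)) (n + 1) rfl

lemma map_prod_uncurry_eq_bind [SFinite μ] (hξ : Measurable (Function.uncurry ξ))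
    (ν : Measure E) : (ν.prod μ).map (Function.uncurry ξ) = ν.bind fun x => μ.map (ξ x) := by
  ext s hs
  rw [Measure.map_apply hξ hs, Measure.prod_apply (hξ hs),
    Measure.bind_apply hs (measurable_map_of_uncurry hξ).aemeasurable]
  exact lintegral_congr fun x => (Measure.map_apply (hξ.comp measurable_prodMk_left) hs).symm

lemma map_mapChain {P : Measure Ω} [IsProbabilityMeasure P] [IsProbabilityMeasure μ]
    (hξ : Measurable (Function.uncurry ξ)) (hV : ∀ n, Measurable (V n))
    (hVind : iIndepFun V P) (hVlaw : ∀ n, P.map (V n) = μ) (x : E) (n : ℕ) :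
    P.map (mapChain ξ V x n) = kIterM ξ μ n x := by
  induction n with
  | zero => simp [mapChain, kIterM, Measure.map_const]
  | succ n ih =>
    have hpair : Measurable fun ω => (mapChain ξ V x n ω, V (n + 1) ω) :=
      (measurable_mapChain hξ hV x n).prodMk (hV (n + 1))
    calc P.map (mapChain ξ V x (n + 1))
        = (P.map fun ω => (mapChain ξ V x n ω, V (n + 1) ω)).map (Function.uncurry ξ) :=
          (Measure.map_map hξ hpair).symm
      _ = ((P.map (mapChain ξ V x n)).prod (P.map (V (n + 1)))).map (Function.uncurry ξ) := by
          rw [(indepFun_iff_map_prod_eq_prod_map_map (measurable_mapChain hξ hV x n).aemeasurable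
            (hV (n + 1)).aemeasurable).1 (indepFun_mapChain hξ hV hVind x n)]
      _ = kIterM ξ μ (n + 1) x := by
          rw [ih, hVlaw, map_prod_uncurry_eq_bind hξ]
          rfl

lemma integral_mapChain {P : Measure Ω} [IsProbabilityMeasure P] [IsProbabilityMeasure μ]
    (hξ : Measurable (Function.uncurry ξ)) (hV : ∀ n, Measurable (V n))
    (hVind : iIndepFun V P) (hVlaw : ∀ n, P.map (V n) = μ) (x : E) (n : ℕ) {f : E → ℝ} {B : ℝ}
    (hf : Measurable f) (hfB : ∀ x, |f x| ≤ B) :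
    ∫ ω, f (mapChain ξ V x n ω) ∂P = (kernelOp ξ μ)^[n] f x := by
  rw [← integral_map (measurable_mapChain hξ hV x n).aemeasurable hf.aestronglyMeasurable,
    map_mapChain hξ hV hVind hVlaw, integral_kIterM hξ hf hfB]

lemma integral_avg_mapChain_sub {P : Measure Ω} [IsProbabilityMeasure P] [IsProbabilityMeasure μ]
    {ξ₁ ξ₀ : E → U → E} (hξ₁ : Measurable (Function.uncurry ξ₁))
    (hξ₀ : Measurable (Function.uncurry ξ₀)) (hV : ∀ n, Measurable (V n))
    (hVind : iIndepFun V P) (hVlaw : ∀ n, P.map (V n) = μ) (x : E) {f : E → ℝ} {B : ℝ}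
    (hf : Measurable f) (hfB : ∀ x, |f x| ≤ B) (N : ℕ) :
    ∫ ω, (N : ℝ)⁻¹ * ∑ n ∈ Finset.Icc 1 N, (f (mapChain ξ₁ V x n ω) - f (mapChain ξ₀ V x n ω)) ∂P =
      (N : ℝ)⁻¹ * ∑ n ∈ Finset.range N,
        ((kernelOp ξ₁ μ)^[n + 1] f x - (kernelOp ξ₀ μ)^[n + 1] f x) := by
  have hint : ∀ {ξ : E → U → E}, Measurable (Function.uncurry ξ) → ∀ n,
      Integrable (fun ω => f (mapChain ξ V x n ω)) P := fun hξ n =>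
    (hf.comp (measurable_mapChain hξ hV x n)).integrable_of_abs_le fun _ => hfB _
  rw [integral_const_mul, integral_finsetSum _
    (f := fun n ω => f (mapChain ξ₁ V x n ω) - f (mapChain ξ₀ V x n ω))
    fun n _ => (hint hξ₁ n).sub (hint hξ₀ n), Finset.sum_Icc_one_eq_sum_range]
  refine congrArg _ (Finset.sum_congr rfl fun n _ => ?_)
  rw [integral_sub (hint hξ₁ _) (hint hξ₀ _), integral_mapChain hξ₁ hV hVind hVlaw x _ hf hfB,
    integral_mapChain hξ₀ hV hVind hVlaw x _ hf hfB]

end ChainLaw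

section GeometricSums

variable {ρ : ℝ}

lemma hasSum_succ_mul_geometric (hρ0 : 0 ≤ ρ) (hρ1 : ρ < 1) :
    HasSum (fun n : ℕ => ((n : ℝ) + 1) * ρ ^ n) (1 / (1 - ρ) ^ 2) := by
  have hρ : ‖ρ‖ < 1 := by rwa [Real.norm_of_nonneg hρ0]
  have h1ρ : 1 - ρ ≠ 0 := by linarith
  have h := (hasSum_coe_mul_geometric_of_norm_lt_one hρ).add (hasSum_geometric_of_lt_one hρ0 hρ1)
  have hterm : (fun n : ℕ => (n : ℝ) * ρ ^ n + ρ ^ n) = fun n : ℕ => ((n : ℝ) + 1) * ρ ^ n :=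
    funext fun n => by ring
  have hsum : ρ / (1 - ρ) ^ 2 + (1 - ρ)⁻¹ = 1 / (1 - ρ) ^ 2 := by field_simp; ring
  rwa [hterm, hsum] at h

lemma abs_sum_range_sub_le_of_geometric (hρ0 : 0 ≤ ρ) (hρ1 : ρ < 1) {Q Q' Δ : ℝ}
    {b : ℕ → ℕ → ℝ} {β d : ℕ → ℝ} (hβ : ∀ m, |β m| ≤ Q * ρ ^ m)
    (hbβ : ∀ k m, |b k m - β m| ≤ Q' * ρ ^ (k + m))
    (hd : ∀ n, d n = ∑ k ∈ Finset.range (n + 1), b k (n - k))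
    (hdΔ : Tendsto d atTop (𝓝 Δ)) (N : ℕ) :
    |∑ n ∈ Finset.range N, (d n - Δ)| ≤ (Q + Q') / (1 - ρ) ^ 2 := by
  have h1ρ : 0 < 1 - ρ := by linarith
  have hQ : 0 ≤ Q := by simpa using (abs_nonneg _).trans (hβ 0)
  have hgeom := hasSum_geometric_of_lt_one hρ0 hρ1
  have hdiag : ∀ n, |d n - ∑ m ∈ Finset.range (n + 1), β m| ≤ Q' * ((n + 1) * ρ ^ n) := by
    intro n
    rw [hd n, ← Finset.sum_range_reflect β, ← Finset.sum_sub_distrib]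
    refine (Finset.abs_sum_le_sum_abs _ _).trans ?_
    calc ∑ k ∈ Finset.range (n + 1), |b k (n - k) - β (n + 1 - 1 - k)|
        ≤ ∑ _k ∈ Finset.range (n + 1), Q' * ρ ^ n := by
          refine Finset.sum_le_sum fun k hk => ?_
          have hkn : k + (n - k) = n := by have := Finset.mem_range.1 hk; omega
          simpa [hkn] using hbβ k (n - k)
      _ = Q' * ((n + 1) * ρ ^ n) := by simp; ring
  have hΔ : HasSum β Δ := by
    have hβabs : Summable fun m => ‖β m‖ :=
      (hgeom.summable.mul_left Q).of_nonneg_of_le (fun _ => norm_nonneg _) hβ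
    rw [hasSum_iff_tendsto_nat_of_summable_norm hβabs, ← tendsto_add_atTop_iff_nat 1]
    have hdiag0 : Tendsto (fun n => d n - ∑ m ∈ Finset.range (n + 1), β m) atTop (𝓝 0) :=
      squeeze_zero_norm hdiag <| by
        simpa using (hasSum_succ_mul_geometric hρ0 hρ1).summable.tendsto_atTop_zero.const_mul Q'
    simpa using hdΔ.sub hdiag0
  have htail : ∀ n, |Δ - ∑ m ∈ Finset.range (n + 1), β m| ≤ Q / (1 - ρ) * ρ ^ n := by
    intro n
    rw [← hΔ.tsum_eq, ← hΔ.summable.sum_add_tsum_nat_add (n + 1), add_sub_cancel_left]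
    calc ‖∑' m, β (m + (n + 1))‖ ≤ Q * ρ ^ (n + 1) * (1 - ρ)⁻¹ :=
          tsum_of_norm_bounded (hgeom.mul_left _) fun m => (hβ _).trans_eq (by ring)
      _ ≤ Q / (1 - ρ) * ρ ^ n := by
          rw [pow_succ, div_eq_mul_inv]
          have : Q * ρ ^ n * (1 - ρ)⁻¹ * ρ ≤ Q * ρ ^ n * (1 - ρ)⁻¹ :=
            mul_le_of_le_one_right (by positivity) hρ1.le
          linarith
  calc |∑ n ∈ Finset.range N, (d n - Δ)|
      ≤ ∑ n ∈ Finset.range N, (Q' * ((n + 1) * ρ ^ n) + Q / (1 - ρ) * ρ ^ n) := by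
        refine (Finset.abs_sum_le_sum_abs _ _).trans (Finset.sum_le_sum fun n _ => ?_)
        have := abs_sub_le (d n) (∑ m ∈ Finset.range (n + 1), β m) Δ
        rw [abs_sub_comm (∑ m ∈ Finset.range (n + 1), β m) Δ] at this
        linarith [hdiag n, htail n]
    _ = Q' * ∑ n ∈ Finset.range N, (n + 1) * ρ ^ n + Q / (1 - ρ) * ∑ n ∈ Finset.range N, ρ ^ n := by
        rw [Finset.sum_add_distrib, Finset.mul_sum, Finset.mul_sum]
    _ ≤ Q' * (1 / (1 - ρ) ^ 2) + Q / (1 - ρ) * (1 - ρ)⁻¹ := by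
        have hQ' : 0 ≤ Q' := by simpa using (abs_nonneg _).trans (hbβ 0 0)
        gcongr
        · exact sum_le_hasSum _ (fun n _ => by positivity) (hasSum_succ_mul_geometric hρ0 hρ1)
        · exact sum_le_hasSum _ (fun n _ => by positivity) hgeom
    _ = (Q + Q') / (1 - ρ) ^ 2 := by field_simp; ring

end GeometricSums

lemma abs_indicator_le_of_forall_mem {E : Type*} {X : Set E} {f : E → ℝ} {G : ℝ} (hG : 0 ≤ G)
    (hfG : ∀ y ∈ X, |f y| ≤ G) (y : E) : |X.indicator f y| ≤ G := by
  by_cases hy : y ∈ X <;> simp [hy, hfG, hG]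

section GeometricErgodicity

variable {E U : Type*} [MeasurableSpace E] [MeasurableSpace U] {ξ : E → U → E} {μ : Measure U}
  [IsProbabilityMeasure μ] {π : Measure E} {X : Set E} {C ρ : ℝ}

def IsGeomErgodicOn (ξ : E → U → E) (μ : Measure U) (π : Measure E) (X : Set E) (C ρ : ℝ) :
    Prop :=
  ∀ n : ℕ, 1 ≤ n → ∀ x ∈ X, ∀ s : Set E, MeasurableSet s →
    |((kIterM ξ μ n x) s).toReal - (π s).toReal| ≤ C * ρ ^ n

lemma IsGeomErgodicOn.ae_mem [IsFiniteMeasure π] (h : IsGeomErgodicOn ξ μ π X C ρ)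
    (hρ0 : 0 ≤ ρ) (hρ1 : ρ < 1) (hξ : Measurable (Function.uncurry ξ)) (hX : MeasurableSet X)
    (hξX : ∀ x ∈ X, ∀ u, ξ x u ∈ X) {x : E} (hx : x ∈ X) : ∀ᵐ y ∂π, y ∈ X := by
  have hle : ∀ n, 1 ≤ n → (π Xᶜ).toReal ≤ C * ρ ^ n := by
    intro n hn
    have hK : kIterM ξ μ n x Xᶜ = 0 := ae_iff.1 (ae_mem_kIterM hξ hX hξX hx n)
    simpa [hK] using h n hn x hx Xᶜ hX.compl
  have hlim : Tendsto (fun n : ℕ => C * ρ ^ n) atTop (𝓝 0) := by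
    simpa using (tendsto_pow_atTop_nhds_zero_of_lt_one hρ0 hρ1).const_mul C
  have hπ : (π Xᶜ).toReal = 0 :=
    le_antisymm (ge_of_tendsto hlim (eventually_atTop.2 ⟨1, hle⟩)) ENNReal.toReal_nonneg
  rw [ENNReal.toReal_eq_zero_iff] at hπ
  exact ae_iff.2 (hπ.resolve_right (measure_ne_top π _))

lemma IsGeomErgodicOn.abs_integral_kIterM_sub_le [IsProbabilityMeasure π]
    (h : IsGeomErgodicOn ξ μ π X C ρ) (hρ0 : 0 ≤ ρ) (hξ : Measurable (Function.uncurry ξ))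
    (hX : MeasurableSet X) (hξX : ∀ x ∈ X, ∀ u, ξ x u ∈ X) (hπX : ∀ᵐ y ∂π, y ∈ X) {x : E}
    (hx : x ∈ X) {f : E → ℝ} {G : ℝ} (hf : Measurable f) (hfG : ∀ y ∈ X, |f y| ≤ G) (n : ℕ) :
    |∫ y, f y ∂(kIterM ξ μ n x) - ∫ y, f y ∂π| ≤ 2 * G * (max 1 C * ρ ^ n) := by
  have := isProbabilityMeasure_kIterM (μ := μ) hξ n x
  have hG : 0 ≤ G := (abs_nonneg _).trans (hfG x hx)
  have hfX := abs_indicator_le_of_forall_mem hG hfG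
  -- both measures live on `X`, so only the values of `f` on `X` matter
  have hKf : ∫ y, f y ∂(kIterM ξ μ n x) = ∫ y, X.indicator f y ∂(kIterM ξ μ n x) :=
    integral_congr_ae ((ae_mem_kIterM hξ hX hξX hx n).mono fun y hy => (indicator_of_mem hy f).symm)
  have hπf : ∫ y, f y ∂π = ∫ y, X.indicator f y ∂π :=
    integral_congr_ae (hπX.mono fun y hy => (indicator_of_mem hy f).symm)
  rw [hKf, hπf]
  rcases n.eq_zero_or_pos with rfl | hn
  · have hint : ∀ κ : Measure E, [IsProbabilityMeasure κ] → |∫ y, X.indicator f y ∂κ| ≤ G :=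
      fun κ _ => abs_integral_le_of_ae_abs_le (ae_of_all _ hfX)
    calc _ ≤ G + G := (abs_sub _ _).trans (add_le_add (hint _) (hint _))
      _ ≤ 2 * G * (max 1 C * ρ ^ 0) := by nlinarith [le_max_left 1 C]
  · calc _ ≤ 2 * G * (C * ρ ^ n) := abs_integral_sub_integral_le_of_abs_measureReal_sub_le
          (h n hn x hx) (hf.indicator hX) hfX
      _ ≤ 2 * G * (max 1 C * ρ ^ n) := by gcongr; exact le_max_right 1 C

lemma IsGeomErgodicOn.tendsto_kernelOp_iterate [IsProbabilityMeasure π]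
    (h : IsGeomErgodicOn ξ μ π X C ρ) (hρ0 : 0 ≤ ρ) (hρ1 : ρ < 1)
    (hξ : Measurable (Function.uncurry ξ)) (hX : MeasurableSet X) (hξX : ∀ x ∈ X, ∀ u, ξ x u ∈ X)
    (hπX : ∀ᵐ y ∂π, y ∈ X) {x : E} (hx : x ∈ X) {f : E → ℝ} {B : ℝ} (hf : Measurable f)
    (hfB : ∀ y, |f y| ≤ B) :
    Tendsto (fun n => (kernelOp ξ μ)^[n] f x) atTop (𝓝 (∫ y, f y ∂π)) := by
  rw [tendsto_iff_norm_sub_tendsto_zero]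
  refine squeeze_zero (fun _ => norm_nonneg _) (fun n => ?_) (by
    simpa using (tendsto_pow_atTop_nhds_zero_of_lt_one hρ0 hρ1).const_mul (2 * B * max 1 C))
  rw [Real.norm_eq_abs, ← integral_kIterM hξ hf hfB]
  exact (h.abs_integral_kIterM_sub_le hρ0 hξ hX hξX hπX hx hf (fun y _ => hfB y) n).trans_eq
    (by ring)

end GeometricErgodicity

section TwoLevels

variable {E U : Type*} [MeasurableSpace E] [MeasurableSpace U] {μ : Measure U}
  {ξ₁ ξ₀ : E → U → E} {X : Set E} {ε : ℝ}

lemma abs_kernelOp_sub_le_of_mapsTo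
    (hpert : ∀ (f : E → ℝ) (G : ℝ), Measurable f → (∀ x, |f x| ≤ G) →
      ∀ x ∈ X, |kernelOp ξ₁ μ f x - kernelOp ξ₀ μ f x| ≤ ε * G)
    (hX : MeasurableSet X) (hξ₁X : ∀ x ∈ X, ∀ u, ξ₁ x u ∈ X) (hξ₀X : ∀ x ∈ X, ∀ u, ξ₀ x u ∈ X)
    {f : E → ℝ} {G : ℝ} (hf : Measurable f) (hG : 0 ≤ G) (hfG : ∀ y ∈ X, |f y| ≤ G) {x : E}
    (hx : x ∈ X) : |kernelOp ξ₁ μ f x - kernelOp ξ₀ μ f x| ≤ ε * G := by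
  have := hpert _ G (hf.indicator hX) (abs_indicator_le_of_forall_mem hG hfG) x hx
  rwa [kernelOp_indicator_of_mapsTo hξ₁X hx, kernelOp_indicator_of_mapsTo hξ₀X hx] at this

variable [IsProbabilityMeasure μ]

lemma kernelOp_iterate_sub_iterate (hξ₁ : Measurable (Function.uncurry ξ₁))
    (hξ₀ : Measurable (Function.uncurry ξ₀)) {f : E → ℝ} {B : ℝ} (hf : Measurable f)
    (hfB : ∀ x, |f x| ≤ B) (n : ℕ) (x : E) :
    (kernelOp ξ₁ μ)^[n + 1] f x - (kernelOp ξ₀ μ)^[n + 1] f x =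
      ∑ k ∈ Finset.range (n + 1), ∫ y, (kernelOp ξ₁ μ ((kernelOp ξ₁ μ)^[n - k] f) y -
        kernelOp ξ₀ μ ((kernelOp ξ₁ μ)^[n - k] f) y) ∂(kIterM ξ₀ μ k x) := by
  set K₁ := kernelOp ξ₁ μ
  set K₀ := kernelOp ξ₀ μ
  -- telescope along `k ↦ K₀^k K₁^(n+1-k) f`
  set a : ℕ → ℝ := fun k => ∫ y, K₁^[n + 1 - k] f y ∂(kIterM ξ₀ μ k x)
  have hmeas : ∀ j, Measurable (K₁^[j] f) := measurable_kernelOp_iterate hξ₁ hf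
  have hbdd : ∀ j, ∀ y, |K₁^[j] f y| ≤ B := abs_kernelOp_iterate_le hfB
  have hstep : ∀ k ∈ Finset.range (n + 1), a k - a (k + 1) =
      ∫ y, (K₁ (K₁^[n - k] f) y - K₀ (K₁^[n - k] f) y) ∂(kIterM ξ₀ μ k x) := by
    intro k hk
    have := isProbabilityMeasure_kIterM (μ := μ) hξ₀ k x
    have hk' : n + 1 - k = n - k + 1 := by have := Finset.mem_range.1 hk; omega
    simp only [a, hk', Nat.sub_add_eq, Nat.add_sub_cancel, Function.iterate_succ_apply',
      integral_kIterM_succ hξ₀ (hmeas _) (hbdd _)]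
    rw [integral_sub ((measurable_kernelOp hξ₁ (hmeas _)).integrable_of_abs_le
      (abs_kernelOp_le (hbdd _))) ((measurable_kernelOp hξ₀ (hmeas _)).integrable_of_abs_le
      (abs_kernelOp_le (hbdd _)))]
  rw [← Finset.sum_congr rfl hstep, Finset.sum_range_sub']
  simp only [a, Nat.sub_zero, Nat.sub_self, integral_kIterM hξ₀ (hmeas _) (hbdd _),
    Function.iterate_zero_apply]
  rfl

theorem abs_sum_kernelOp_iterate_sub_le {π₁ π₀ : Measure E} [IsProbabilityMeasure π₁]
    [IsProbabilityMeasure π₀] {C ρ : ℝ} (hρ0 : 0 ≤ ρ) (hρ1 : ρ < 1) (hX : MeasurableSet X)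
    (hξ₁ : Measurable (Function.uncurry ξ₁)) (hξ₀ : Measurable (Function.uncurry ξ₀))
    (hξ₁X : ∀ x ∈ X, ∀ u, ξ₁ x u ∈ X) (hξ₀X : ∀ x ∈ X, ∀ u, ξ₀ x u ∈ X)
    (h₁ : IsGeomErgodicOn ξ₁ μ π₁ X C ρ) (h₀ : IsGeomErgodicOn ξ₀ μ π₀ X C ρ)
    (hpert : ∀ (f : E → ℝ) (G : ℝ), Measurable f → (∀ x, |f x| ≤ G) →
      ∀ x ∈ X, |kernelOp ξ₁ μ f x - kernelOp ξ₀ μ f x| ≤ ε * G)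
    {x₀ : E} (hx₀ : x₀ ∈ X) {f : E → ℝ} {B : ℝ} (hf : Measurable f) (hfB : ∀ x, |f x| ≤ B)
    (N : ℕ) :
    |∑ n ∈ Finset.range N, ((kernelOp ξ₁ μ)^[n + 1] f x₀ - (kernelOp ξ₀ μ)^[n + 1] f x₀ -
      (∫ y, f y ∂π₁ - ∫ y, f y ∂π₀))| ≤
      2 * max 1 C * (1 + 2 * max 1 C) / (1 - ρ) ^ 2 * (ε * B) := by
  set M := max 1 C
  have hπ₁X := h₁.ae_mem hρ0 hρ1 hξ₁ hX hξ₁X hx₀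
  have hπ₀X := h₀.ae_mem hρ0 hρ1 hξ₀ hX hξ₀X hx₀
  have hB : 0 ≤ B := (abs_nonneg _).trans (hfB x₀)
  have hmix : ∀ m, ∀ y ∈ X, |(kernelOp ξ₁ μ)^[m] f y - ∫ y, f y ∂π₁| ≤ 2 * B * (M * ρ ^ m) := by
    intro m y hy
    rw [← integral_kIterM hξ₁ hf hfB]
    exact h₁.abs_integral_kIterM_sub_le hρ0 hξ₁ hX hξ₁X hπ₁X hy hf (fun y _ => hfB y) m
  -- `K₁ - K₀` kills constants, so `g m = (K₁ - K₀) K₁^m f` only sees `K₁^m f - π₁ f`,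
  -- which is `O(ρ^m)` on `X` by `hmix`
  set g : ℕ → E → ℝ := fun m y =>
    kernelOp ξ₁ μ ((kernelOp ξ₁ μ)^[m] f) y - kernelOp ξ₀ μ ((kernelOp ξ₁ μ)^[m] f) y
  have hgm : ∀ m, Measurable (g m) := fun m =>
    (measurable_kernelOp hξ₁ (measurable_kernelOp_iterate hξ₁ hf m)).sub
      (measurable_kernelOp hξ₀ (measurable_kernelOp_iterate hξ₁ hf m))
  have hg : ∀ m, ∀ y ∈ X, |g m y| ≤ ε * (2 * B * (M * ρ ^ m)) := by
    intro m y hy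
    have hmeas := measurable_kernelOp_iterate (μ := μ) hξ₁ hf m
    have hbdd := abs_kernelOp_iterate_le (μ := μ) (ξ := ξ₁) hfB m
    have hcentre : g m y = kernelOp ξ₁ μ (fun z => (kernelOp ξ₁ μ)^[m] f z - ∫ y, f y ∂π₁) y -
        kernelOp ξ₀ μ (fun z => (kernelOp ξ₁ μ)^[m] f z - ∫ y, f y ∂π₁) y := by
      rw [kernelOp_sub_const hξ₁ hmeas hbdd, kernelOp_sub_const hξ₀ hmeas hbdd]
      ring
    rw [hcentre]
    exact abs_kernelOp_sub_le_of_mapsTo hpert hX hξ₁X hξ₀X (hmeas.sub_const _) (by positivity)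
      (hmix m) hy
  have hdΔ : Tendsto (fun n => (kernelOp ξ₁ μ)^[n + 1] f x₀ - (kernelOp ξ₀ μ)^[n + 1] f x₀) atTop
      (𝓝 (∫ y, f y ∂π₁ - ∫ y, f y ∂π₀)) :=
    ((tendsto_add_atTop_iff_nat 1).2 (h₁.tendsto_kernelOp_iterate hρ0 hρ1 hξ₁ hX hξ₁X hπ₁X hx₀ hf
      hfB)).sub ((tendsto_add_atTop_iff_nat 1).2
        (h₀.tendsto_kernelOp_iterate hρ0 hρ1 hξ₀ hX hξ₀X hπ₀X hx₀ hf hfB))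
  refine (abs_sum_range_sub_le_of_geometric hρ0 hρ1 (Q := ε * (2 * B * M))
    (Q' := 2 * (ε * (2 * B * M)) * M) (β := fun m => ∫ y, g m y ∂π₀)
    (b := fun k m => ∫ y, g m y ∂(kIterM ξ₀ μ k x₀))
    (fun m => abs_integral_le_of_ae_abs_le (hπ₀X.mono fun y hy => (hg m y hy).trans_eq (by ring)))
    (fun k m => (h₀.abs_integral_kIterM_sub_le hρ0 hξ₀ hX hξ₀X hπ₀X hx₀ (hgm m) (hg m) k).trans_eq
      (by ring))
    (fun n => kernelOp_iterate_sub_iterate hξ₁ hξ₀ hf hfB n x₀) hdΔ N).trans_eq ?_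
  ring

end TwoLevels

theorem coupled_mcmc_bias_general
    {d : ℕ} {U Ω : Type*} [MeasurableSpace U] [MeasurableSpace Ω]
    (μ : Measure U) [IsProbabilityMeasure μ]
    (P : Measure Ω) [IsProbabilityMeasure P]
    (X : Set (EuclideanSpace ℝ (Fin d))) (hXcomp : IsCompact X)
    -- the hierarchy of iterated random maps and target measures
    (ξ : ℕ → EuclideanSpace ℝ (Fin d) → U → EuclideanSpace ℝ (Fin d))
    (hξmeas : ∀ l, Measurable (Function.uncurry (ξ l)))
    (hξmaps : ∀ l, ∀ x ∈ X, ∀ u, ξ l x u ∈ X)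
    (π : ℕ → Measure (EuclideanSpace ℝ (Fin d))) (hπprob : ∀ l, IsProbabilityMeasure (π l))
    (h : ℕ → ℝ) (hh : ∀ l, h l ∈ Set.Ioo (0 : ℝ) 1)
    (C ρ β : ℝ) (hC : 0 ≤ C) (hρ : ρ ∈ Set.Ioo (0 : ℝ) 1)
    -- (A1) uniform-in-`l` geometric ergodicity in total variation
    (hA1 : ∀ l : ℕ, ∀ n : ℕ, 1 ≤ n → ∀ x ∈ X, ∀ s : Set (EuclideanSpace ℝ (Fin d)),
      MeasurableSet s → |((kIterM (ξ l) μ n x) s).toReal - ((π l) s).toReal| ≤ C * ρ ^ n)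
    -- (A3) perturbation bounds between consecutive levels
    (hA3b : ∀ l : ℕ, 1 ≤ l → ∀ (φ : EuclideanSpace ℝ (Fin d) → ℝ) (B : ℝ), Measurable φ →
      (∀ x, |φ x| ≤ B) → ∀ x ∈ X,
      |(∫ u, φ (ξ l x u) ∂μ) - ∫ u, φ (ξ (l - 1) x u) ∂μ| ≤ C * B * h l ^ β)
    -- common i.i.d. driving noise and common starting point
    (V : ℕ → Ω → U) (hVmeas : ∀ n, Measurable (V n))
    (hViid : iIndepFun V P)
    (hVlaw : ∀ n, P.map (V n) = μ)
    (x₀ : EuclideanSpace ℝ (Fin d)) (hx₀ : x₀ ∈ X) :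
    ∃ C' : ℝ, 0 ≤ C' ∧
      ∀ l : ℕ, 1 ≤ l → ∀ N : ℕ, 1 ≤ N →
      ∀ (φ : EuclideanSpace ℝ (Fin d) → ℝ) (B L : ℝ), Measurable φ →
        (∀ x, |φ x| ≤ B) → (∀ x y, |φ x - φ y| ≤ L * ‖x - y‖) →
        |(∫ ω, (N : ℝ)⁻¹ * ∑ n ∈ Finset.Icc 1 N,
            (φ (mapChain (ξ l) V x₀ n ω) - φ (mapChain (ξ (l - 1)) V x₀ n ω)) ∂P)
          - ((∫ y, φ y ∂(π l)) - ∫ y, φ y ∂(π (l - 1)))|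
        ≤ C' * (max B L) * h l ^ β / N := by
  obtain ⟨hρ0, hρ1⟩ := hρ
  refine ⟨2 * max 1 C * (1 + 2 * max 1 C) / (1 - ρ) ^ 2 * C, by positivity, ?_⟩
  intro l hl N hN φ B L hφ hφB _
  have hhβ : 0 ≤ h l ^ β := Real.rpow_nonneg (hh l).1.le β
  have hbias := abs_sum_kernelOp_iterate_sub_le (ε := C * h l ^ β) hρ0.le hρ1
    hXcomp.isClosed.measurableSet (hξmeas l) (hξmeas (l - 1)) (hξmaps l) (hξmaps (l - 1))
    (hA1 l) (hA1 (l - 1)) (fun f G hf hfG x hx => (hA3b l hl f G hf hfG x hx).trans_eq (by ring))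
    hx₀ hφ hφB N
  have hN0 : (N : ℝ) ≠ 0 := by exact_mod_cast (by omega : N ≠ 0)
  have hcentre : ∀ (a : ℕ → ℝ) (c : ℝ), (N : ℝ)⁻¹ * ∑ n ∈ Finset.range N, a n - c =
      (N : ℝ)⁻¹ * ∑ n ∈ Finset.range N, (a n - c) := fun a c => by
    rw [Finset.sum_sub_distrib, Finset.sum_const, Finset.card_range, nsmul_eq_mul]
    field_simp
  rw [integral_avg_mapChain_sub (hξmeas l) (hξmeas (l - 1)) hVmeas hViid hVlaw x₀ hφ hφB,
    hcentre, abs_mul, abs_inv, Nat.abs_cast]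
  calc (N : ℝ)⁻¹ * |_| ≤ (N : ℝ)⁻¹ * (2 * max 1 C * (1 + 2 * max 1 C) / (1 - ρ) ^ 2 *
        (C * h l ^ β * B)) := by gcongr
    _ = 2 * max 1 C * (1 + 2 * max 1 C) / (1 - ρ) ^ 2 * C * B * h l ^ β / N := by ring
    _ ≤ 2 * max 1 C * (1 + 2 * max 1 C) / (1 - ρ) ^ 2 * C * max B L * h l ^ β / N := by
        gcongr
        exact le_max_left B L

/-- Proposition 1 of the paper: under (A1)–(A3) the coupled MCMC
estimator of `[π_l − π_{l−1}](φ)` has bias `O(h_l^β / N_l)`. -/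
theorem coupled_mcmc_bias
    {d : ℕ} {U Ω : Type*} [MeasurableSpace U] [MeasurableSpace Ω]
    (μ : Measure U) [IsProbabilityMeasure μ]
    (P : Measure Ω) [IsProbabilityMeasure P]
    (X : Set (EuclideanSpace ℝ (Fin d))) (hXcomp : IsCompact X)
    -- the hierarchy of iterated random maps and target measures
    (ξ : ℕ → EuclideanSpace ℝ (Fin d) → U → EuclideanSpace ℝ (Fin d))
    (hξmeas : ∀ l, Measurable (Function.uncurry (ξ l)))
    (hξmaps : ∀ l, ∀ x ∈ X, ∀ u, ξ l x u ∈ X)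
    (π : ℕ → Measure (EuclideanSpace ℝ (Fin d))) (hπprob : ∀ l, IsProbabilityMeasure (π l))
    (hπinv : ∀ l, (π l).bind (fun x => μ.map fun u => ξ l x u) = π l)
    (h : ℕ → ℝ) (hh : ∀ l, h l ∈ Set.Ioo (0 : ℝ) 1) (hhdec : StrictAnti h)
    (C ρ β : ℝ) (hC : 0 ≤ C) (hρ : ρ ∈ Set.Ioo (0 : ℝ) 1) (hβ : 0 < β)
    -- (A1) uniform-in-`l` geometric ergodicity in total variation
    (hA1 : ∀ l : ℕ, ∀ n : ℕ, 1 ≤ n → ∀ x ∈ X, ∀ s : Set (EuclideanSpace ℝ (Fin d)),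
      MeasurableSet s → |((kIterM (ξ l) μ n x) s).toReal - ((π l) s).toReal| ≤ C * ρ ^ n)
    -- (A2) Lipschitz-smoothing of the kernels
    (hA2 : ∀ l : ℕ, ∀ (φ : EuclideanSpace ℝ (Fin d) → ℝ) (B L : ℝ), Measurable φ →
      (∀ x, |φ x| ≤ B) → (∀ x y, |φ x - φ y| ≤ L * ‖x - y‖) →
      ∀ x ∈ X, ∀ y ∈ X,
        |(∫ u, φ (ξ l x u) ∂μ) - ∫ u, φ (ξ l y u) ∂μ| ≤ C * (max B L) * ‖x - y‖)
    -- (A3) perturbation bounds between consecutive levels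
    (hA3a : ∀ l : ℕ, 1 ≤ l → ∀ (φ : EuclideanSpace ℝ (Fin d) → ℝ) (B : ℝ), Measurable φ →
      (∀ x, |φ x| ≤ B) →
      |(∫ y, φ y ∂(π l)) - ∫ y, φ y ∂(π (l - 1))| ≤ C * B * h l ^ β)
    (hA3b : ∀ l : ℕ, 1 ≤ l → ∀ (φ : EuclideanSpace ℝ (Fin d) → ℝ) (B : ℝ), Measurable φ →
      (∀ x, |φ x| ≤ B) → ∀ x ∈ X,
      |(∫ u, φ (ξ l x u) ∂μ) - ∫ u, φ (ξ (l - 1) x u) ∂μ| ≤ C * B * h l ^ β)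
    -- common i.i.d. driving noise and common starting point
    (V : ℕ → Ω → U) (hVmeas : ∀ n, Measurable (V n))
    (hViid : iIndepFun V P)
    (hVlaw : ∀ n, P.map (V n) = μ)
    (x₀ : EuclideanSpace ℝ (Fin d)) (hx₀ : x₀ ∈ X) :
    ∃ C' : ℝ, 0 ≤ C' ∧
      ∀ l : ℕ, 1 ≤ l → ∀ N : ℕ, 1 ≤ N →
      ∀ (φ : EuclideanSpace ℝ (Fin d) → ℝ) (B L : ℝ), Measurable φ →
        (∀ x, |φ x| ≤ B) → (∀ x y, |φ x - φ y| ≤ L * ‖x - y‖) →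
        |(∫ ω, (N : ℝ)⁻¹ * ∑ n ∈ Finset.Icc 1 N,
            (φ (mapChain (ξ l) V x₀ n ω) - φ (mapChain (ξ (l - 1)) V x₀ n ω)) ∂P)
          - ((∫ y, φ y ∂(π l)) - ∫ y, φ y ∂(π (l - 1)))|
        ≤ C' * (max B L) * h l ^ β / N :=
  coupled_mcmc_bias_general μ P X hXcomp ξ hξmeas hξmaps π hπprob h hh C ρ β hC hρ hA1 hA3b V hVmeas
    hViid hVlaw x₀ hx₀
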